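/- Let T = (S, s0, A, →) be an LTS and φ an HML formula over A. If s0 ⊨ φ (i.e., φ is an immediate effect in T), then Causes(φ, T) is either the singleton set containing only the trivial computation consisting of the single state s0, or Causes(φ, T) is empty. -/
import Mathlib


namespace Causality

universe u v

/-- Hennessy–Milner logic formulae over a set of labels `Λ`. -/
inductive HML (Λ : Type u) : Type u
  | top : HML Λ
  | dia : Λ → HML Λ → HML Λ
  | box : Λ → HML Λ → HML Λ
  | neg : HML Λ → HML Λ
  | and : HML Λ → HML Λ → HML Λ
  | or  : HML Λ → HML Λ → HML Λ

namespace HML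

/-- The set of actions occurring in an HML formula. -/
def alphabet {Λ : Type u} : HML Λ → Set Λ
  | .top => ∅
  | .dia a φ => insert a φ.alphabet
  | .box a φ => insert a φ.alphabet
  | .neg φ => φ.alphabet
  | .and φ ψ => φ.alphabet ∪ ψ.alphabet
  | .or φ ψ => φ.alphabet ∪ ψ.alphabet

/-- Satisfaction of HML formulae with respect to a transition relation. -/
def Sat {S : Type v} {Λ : Type u} (Tr : S → Λ → S → Prop) (s : S) : HML Λ → Prop
  | .top => True
  | .dia a φ => ∃ s', Tr s a s' ∧ Sat Tr s' φ
  | .box a φ => ∀ s', Tr s a s' → Sat Tr s' φ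
  | .neg φ => ¬ Sat Tr s φ
  | .and φ ψ => Sat Tr s φ ∧ Sat Tr s ψ
  | .or φ ψ => Sat Tr s φ ∨ Sat Tr s ψ

end HML

/-- A labeled transition system `(S, s0, A, →)`. -/
structure LTS (S : Type v) (Λ : Type u) where
  states : Set S
  init : S
  alph : Set Λ
  Tr : S → Λ → S → Prop

/-- Well-formedness: the transition relation is contained in `S × A × S`. -/
def LTS.WF {S : Type*} {Λ : Type*} (T : LTS S Λ) : Prop :=
  ∀ s a s', T.Tr s a s' → a ∈ T.alph

/-- `φ` is an immediate effect in `T` whenever it holds in the initial state. -/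
def LTS.ImmediateEffect {S : Type*} {Λ : Type*} (T : LTS S Λ) (φ : HML Λ) : Prop :=
  HML.Sat T.Tr T.init φ

/-- The reachability relation `s ⇒^w s'`. -/
inductive Steps {S : Type*} {Λ : Type*} (Tr : S → Λ → S → Prop) : S → List Λ → S → Prop
  | refl (s : S) : Steps Tr s [] s
  | step {s s' s'' : S} {a : Λ} {w : List Λ} :
      Tr s a s' → Steps Tr s' w s'' → Steps Tr s (a :: w) s''

/-- A finite or infinite list of words. -/
inductive WordList (Λ : Type u) : Type u
  | fin : List (List Λ) → WordList Λ
  | inf : (ℕ → List Λ) → WordList Λ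

namespace WordList

/-- The `j`-th word of a word list. -/
def get {Λ : Type*} : WordList Λ → ℕ → List Λ
  | .fin L, j => L.getD j []
  | .inf f, j => f j

def IsFinOfLength {Λ : Type*} (m : ℕ) : WordList Λ → Prop
  | .fin L => L.length = m
  | .inf _ => False

def IsInf {Λ : Type*} : WordList Λ → Prop
  | .fin _ => False
  | .inf _ => True

def IsFin {Λ : Type*} : WordList Λ → Prop
  | .fin _ => True
  | .inf _ => False

/-- Valid positions in a word list. -/
def ValidIdx {Λ : Type*} (j : ℕ) : WordList Λ → Prop
  | .fin L => j < L.length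
  | .inf _ => True

/-- The set of words occurring in a word list. -/
def words {Λ : Type*} : WordList Λ → Set (List Λ)
  | .fin L => {w | w ∈ L}
  | .inf f => Set.range f

end WordList

/-- Size-compatible families of word lists: all finite of the same length, or all infinite. -/
def SizeCompatible {Λ : Type*} (Ds : List (WordList Λ)) : Prop :=
  (∃ m, ∀ D ∈ Ds, D.IsFinOfLength m) ∨ (∀ D ∈ Ds, D.IsInf)

/-- `glue [l0,…,ln] [w0,…,wn] = l0 w0 … ln wn`. -/
def glue {Λ : Type*} : List Λ → List (List Λ) → List Λ
  | [], _ => []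
  | l :: ls, [] => l :: glue ls []
  | l :: ls, w :: ws => (l :: w) ++ glue ls ws

/-- `χ` has the shape `l0 χ0 … ln χn` over the action sequence `l0 … ln`. -/
def IsGluing {Λ : Type*} (ls χ : List Λ) : Prop :=
  ∃ ws : List (List Λ), ws.length = ls.length ∧ χ = glue ls ws

/-- `traces((l0,D0) … (ln,Dn))`: the pairwise extensions of `l0 … ln` with words from
the size-compatible lists `D0, …, Dn` (the word `l0 … ln` itself arises from the base
case, which is reached exactly when the lists are finite). -/
def traces {Λ : Type*} (ls : List Λ) (Ds : List (WordList Λ)) : Set (List Λ) :=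
  {w | ∃ j, (∀ D ∈ Ds, D.ValidIdx j) ∧ w = glue ls (Ds.map (fun D => D.get j))} ∪
    {w | (∀ D ∈ Ds, D.IsFin) ∧ w = ls}

/-- A computation candidate `(s0,l0,D0), …, (sn,ln,Dn), s(n+1)`. -/
structure Comp (S : Type v) (Λ : Type u) where
  steps : List (S × Λ × WordList Λ)
  last : S

namespace Comp

variable {S : Type*} {Λ : Type*}

/-- The first state of a computation. -/
def first (π : Comp S Λ) : S :=
  match π.steps with
  | [] => π.last
  | (s, _, _) :: _ => s

/-- The action sequence `l0 … ln` of a computation. -/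
def acts (π : Comp S Λ) : List Λ := π.steps.map (fun e => e.2.1)

/-- The word lists `D0, …, Dn` of a computation. -/
def lists (π : Comp S Λ) : List (WordList Λ) := π.steps.map (fun e => e.2.2)

/-- The state sequence `s0, …, s(n+1)` of a computation. -/
def statesList (π : Comp S Λ) : List S := π.steps.map (fun e => e.1) ++ [π.last]

/-- The traces of a computation. -/
def traces (π : Comp S Λ) : Set (List Λ) := Causality.traces π.acts π.lists

end Comp

/-- `s0 →^{l0} s1 … →^{ln} s(n+1)` is a chain of transitions. -/
def IsPath {S : Type*} {Λ : Type*} (Tr : S → Λ → S → Prop) :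
    List (S × Λ × WordList Λ) → S → Prop
  | [], _ => True
  | (s, l, _) :: rest, lastS =>
      Tr s l (match rest with | [] => lastS | (s', _, _) :: _ => s') ∧ IsPath Tr rest lastS

/-- `π` is a computation of the LTS `T`. -/
def IsComp {S : Type*} {Λ : Type*} (T : LTS S Λ) (π : Comp S Λ) : Prop :=
  IsPath T.Tr π.steps π.last ∧ SizeCompatible π.lists ∧
    ∀ w ∈ π.traces, ∃ s, Steps T.Tr π.first w s

/-- Strict sub-words: obtained by deleting at least one letter. -/
def StrictSubword {Λ : Type*} (w' w : List Λ) : Prop := List.Sublist w' w ∧ w' ≠ w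

/-- AC1: positive causality. -/
def AC1 {S : Type*} {Λ : Type*} (T : LTS S Λ) (φ : HML Λ) (π : Comp S Λ) : Prop :=
  IsPath T.Tr π.steps π.last ∧ HML.Sat T.Tr π.last φ

/-- AC2(a): counter-factual. -/
def AC2a {S : Type*} {Λ : Type*} (T : LTS S Λ) (φ : HML Λ) : Prop :=
  ∃ (χ : List Λ) (s' : S), (∀ a ∈ χ, a ∈ T.alph) ∧ Steps T.Tr T.init χ s' ∧
    ¬ HML.Sat T.Tr s' φ

/-- AC2(b): causality of occurrence. -/
def AC2b {S : Type*} {Λ : Type*} (T : LTS S Λ) (φ : HML Λ) (π : Comp S Λ) : Prop :=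
  ∀ χ : List Λ, IsGluing π.acts χ →
    (χ = π.acts ∨ ((∀ a ∈ χ, a ∈ T.alph) ∧ χ ∉ π.traces)) →
    ∀ s', Steps T.Tr T.init χ s' → HML.Sat T.Tr s' φ

/-- AC2(c): causality of non-occurrence. -/
def AC2c {S : Type*} {Λ : Type*} (T : LTS S Λ) (φ : HML Λ) (π : Comp S Λ) : Prop :=
  ∀ χ ∈ π.traces, χ ≠ π.acts → ∀ s', Steps T.Tr T.init χ s' → ¬ HML.Sat T.Tr s' φ

/-- Conditions AC1–AC2(c) for computations starting in the initial state. -/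
def PreCause {S : Type*} {Λ : Type*} (T : LTS S Λ) (φ : HML Λ) (π : Comp S Λ) : Prop :=
  π.first = T.init ∧ IsComp T π ∧ AC1 T φ π ∧ AC2a T φ ∧ AC2b T φ π ∧ AC2c T φ π

/-- `Causes(φ, T)`: computations from the initial state satisfying AC1–AC2(c) together
with the minimality condition AC3 (no sub-computation satisfies AC1–AC2(c)). -/
def Causes {S : Type*} {Λ : Type*} (φ : HML Λ) (T : LTS S Λ) : Set (Comp S Λ) :=
  {π | PreCause T φ π ∧ ∀ π' : Comp S Λ, StrictSubword π'.acts π.acts → ¬ PreCause T φ π'}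

/-- Interleaving of two LTS's. -/
def LTS.interleave {S : Type*} {S' : Type*} {Λ : Type*}
    (T : LTS S Λ) (T' : LTS S' Λ) : LTS (S × S') Λ where
  states := T.states ×ˢ T'.states
  init := (T.init, T'.init)
  alph := T.alph ∪ T'.alph
  Tr := fun p a q => (T.Tr p.1 a q.1 ∧ q.2 = p.2) ∨ (T'.Tr p.2 a q.2 ∧ q.1 = p.1)

/-- Nondeterministic choice of two LTS's; the two initial states are fused into `none`. -/
def LTS.choice {S : Type*} {S' : Type*} {Λ : Type*}
    (T : LTS S Λ) (T' : LTS S' Λ) : LTS (Option (S ⊕ S')) Λ where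
  states := insert none
    ((fun s => some (Sum.inl s)) '' (T.states \ {T.init}) ∪
     (fun q => some (Sum.inr q)) '' (T'.states \ {T'.init}))
  init := none
  alph := T.alph ∪ T'.alph
  Tr := fun x a y =>
    match x, y with
    | none, some (Sum.inl s') => T.Tr T.init a s'
    | none, some (Sum.inr q') => T'.Tr T'.init a q'
    | some (Sum.inl s), some (Sum.inl s') => T.Tr s a s'
    | some (Sum.inr q), some (Sum.inr q') => T'.Tr q a q'
    | _, _ => False

/-- The causal projection `T ↓ φ`: its states and transitions are exactly the states and
steps occurring in some computation in `Causes(φ, T)`. -/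
def LTS.causalProj {S : Type*} {Λ : Type*} (T : LTS S Λ) (φ : HML Λ) : LTS S Λ where
  states := {s | ∃ π ∈ Causes φ T, s ∈ π.statesList}
  init := T.init
  alph := T.alph
  Tr := fun s a s' => ∃ π ∈ Causes φ T, ∃ i : ℕ,
    π.statesList[i]? = some s ∧ π.acts[i]? = some a ∧ π.statesList[i + 1]? = some s'

open Classical in
/-- Projection `w ↓ A` of a word onto the letters of `A`. -/
noncomputable def wordProj {Λ : Type*} (A : Set Λ) (w : List Λ) : List Λ :=
  w.filter (fun a => decide (a ∈ A))

open Classical in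
/-- Projection of the steps of a computation onto the steps labeled in `A`, keeping the
state component selected by `f` and the action. -/
noncomputable def stepsProj {σ τ Λ : Type*} (A : Set Λ) (f : σ → τ)
    (steps : List (σ × Λ × WordList Λ)) : List (τ × Λ) :=
  (steps.filter (fun e => decide (e.2.1 ∈ A))).map (fun e => (f e.1, e.2.1))

/-- Execution sequences given as lists of (source state, action) pairs with a final state. -/
def IsRun {σ : Type*} {Λ : Type*} (Tr : σ → Λ → σ → Prop) : List (σ × Λ) → σ → Prop
  | [], _ => True
  | (s, l) :: rest, lastS =>
      Tr s l (match rest with | [] => lastS | (s', _) :: _ => s') ∧ IsRun Tr rest lastS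

/-- The current (head) state of an execution sequence. -/
def headState {σ : Type*} {Λ : Type*} (xs : List (σ × Λ)) (lastS : σ) : σ :=
  match xs with
  | [] => lastS
  | (s, _) :: _ => s

/-- `Shuffle lastX lastY xs ys zs`: the product execution `zs` is an interleaving of the
execution `xs` (ending in `lastX`) and the execution `ys` (ending in `lastY`). -/
inductive Shuffle {S : Type*} {S' : Type*} {Λ : Type*} (lastX : S) (lastY : S') :
    List (S × Λ) → List (S' × Λ) → List ((S × S') × Λ) → Prop
  | nil : Shuffle lastX lastY [] [] []
  | left {xs ys zs s l} :
      Shuffle lastX lastY xs ys zs →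
      Shuffle lastX lastY ((s, l) :: xs) ys (((s, headState ys lastY), l) :: zs)
  | right {xs ys zs s' l} :
      Shuffle lastX lastY xs ys zs →
      Shuffle lastX lastY xs ((s', l) :: ys) (((headState xs lastX, s'), l) :: zs)

end Causality

namespace Causality

/-- Immediate Causality, Lemma 4.1: if `φ` holds in the initial state of
`T`, then `Causes(φ, T)` is either the singleton set containing only the trivial
computation consisting of the single state `s0`, or it is empty. -/
theorem immediate_causality {S : Type*} {Λ : Type*} (T : LTS S Λ) (φ : HML Λ)
    (h : HML.Sat T.Tr T.init φ) :
    Causes φ T = {(⟨[], T.init⟩ : Comp S Λ)} ∨ Causes φ T = ∅ := by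
  by_cases hne : (Causes φ T).Nonempty
  · left
    obtain ⟨π0, hπ0⟩ := hne
    have hAC2a : AC2a T φ := hπ0.1.2.2.2.1
    have htrivtr : ∀ w ∈ (⟨[], T.init⟩ : Comp S Λ).traces, w = [] := by
      intro w hw
      rcases hw with ⟨j, _, hw⟩ | ⟨_, hw⟩ <;>
        simpa [Comp.acts, Comp.lists, glue] using hw
    have htriv : PreCause T φ (⟨[], T.init⟩ : Comp S Λ) := by
      refine ⟨rfl, ⟨trivial, Or.inl ⟨0, by simp [Comp.lists]⟩, ?_⟩, ⟨trivial, h⟩,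
        hAC2a, ?_, ?_⟩
      · intro w hw
        exact ⟨T.init, (htrivtr w hw) ▸ Steps.refl T.init⟩
      · intro χ hglu _ s' hst
        obtain ⟨ws, _, hχ⟩ := hglu
        have hχnil : χ = [] := by simpa [Comp.acts, glue] using hχ
        subst hχnil
        cases hst
        exact h
      · intro χ hχ hne' s' _
        exact absurd (htrivtr χ hχ) (by simpa [Comp.acts] using hne')
    have htrivC : (⟨[], T.init⟩ : Comp S Λ) ∈ Causes φ T := by
      refine ⟨htriv, ?_⟩
      intro π' hsw _
      obtain ⟨hsub, hne'⟩ := hsw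
      have h1 : π'.acts = [] := List.sublist_nil.mp (by simpa [Comp.acts] using hsub)
      exact hne' (by simpa [Comp.acts] using h1)
    ext π
    constructor
    · intro hπ
      have hacts : π.acts = [] := by
        by_contra hnn
        exact hπ.2 ⟨[], T.init⟩ ⟨List.nil_sublist _, by
          simpa [Comp.acts] using Ne.symm hnn⟩ htriv
      have hsteps : π.steps = [] := by
        simpa [Comp.acts] using hacts
      have hfirst : π.first = T.init := hπ.1.1
      obtain ⟨steps, last⟩ := π
      simp only at hsteps
      subst hsteps
      have : last = T.init := by simpa [Comp.first] using hfirst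
      simp [this]
    · intro hπ
      rw [Set.mem_singleton_iff] at hπ
      subst hπ
      exact htrivC
  · right
    exact Set.not_nonempty_iff_eq_empty.mp hne

end Causality
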